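/- Let F_1,...,F_n be marginal distributions on the nonnegative reals. For every subset S ⊆ {1,...,n} of the items, every pricing p, and every compatible joint distribution F, the contribution to the expected revenue R(p,F) coming from sales of items in S (i.e., E_{v~F}[p_{j*(v,p)} · 1{j*(v,p) ∈ S}], where j*(v,p) is the purchased item) is at most Σ_{i∈S} Mye(F_i). -/

import Mathlib

open MeasureTheory
open scoped ENNReal NNReal

noncomputable section

/-- A buyer's purchase rule for `n` items: given a valuation profile and a vector of item prices
(in `[0,∞]`), `choose` returns the purchased item (or `none` if nothing is purchased).
The axioms say: a purchased item has a finite price and yields nonnegative utility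
(`feasible`), the purchased item maximizes utility among all items (`optimal`), and the buyer
does purchase whenever some item yields nonnegative utility (`active`). Ties among
utility-maximizing items are broken according to the (fixed) rule embodied by `choose`. -/
structure BuyerRule (n : ℕ) where
  choose : (Fin n → ℝ) → (Fin n → ℝ≥0∞) → Option (Fin n)
  feasible : ∀ v p j, choose v p = some j → p j ≠ ⊤ ∧ (p j).toReal ≤ v j
  optimal : ∀ v p j k, choose v p = some j → p k ≠ ⊤ →
      v k - (p k).toReal ≤ v j - (p j).toReal
  active : ∀ v p, (∃ k, p k ≠ ⊤ ∧ (p k).toReal ≤ v k) → (choose v p).isSome = true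

/-- The seller's revenue from valuation profile `v` under pricing `p`. -/
def BuyerRule.revenue {n : ℕ} (B : BuyerRule n) (p : Fin n → ℝ≥0∞) (v : Fin n → ℝ) : ℝ≥0∞ :=
  (B.choose v p).elim 0 (fun j => p j)

/-- A joint distribution `F` on valuation profiles is compatible with the marginals `marg`
if it is a probability measure whose `j`-th one-dimensional marginal is `marg j` for every `j`. -/
def Compatible {n : ℕ} (marg : Fin n → Measure ℝ) (F : Measure (Fin n → ℝ)) : Prop :=
  IsProbabilityMeasure F ∧ ∀ j, F.map (fun v => v j) = marg j

/-- `R(p,F)`: the expected revenue of pricing `p` under joint distribution `F`. -/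
def expRev {n : ℕ} (B : BuyerRule n) (p : Fin n → ℝ≥0∞) (F : Measure (Fin n → ℝ)) : ℝ≥0∞ :=
  ∫⁻ v, B.revenue p v ∂F

/-- `R(p)`: the robust revenue guarantee of `p`, the infimum of `R(p,F)` over compatible `F`. -/
def robustRev {n : ℕ} (B : BuyerRule n) (marg : Fin n → Measure ℝ) (p : Fin n → ℝ≥0∞) : ℝ≥0∞ :=
  ⨅ (F : Measure (Fin n → ℝ)) (_ : Compatible marg F), expRev B p F

/-- `R*`: the optimal robust revenue guarantee over all pricings. -/
def optRobust {n : ℕ} (B : BuyerRule n) (marg : Fin n → Measure ℝ) : ℝ≥0∞ :=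
  ⨆ p : Fin n → ℝ≥0∞, robustRev B marg p

/-- The Myerson (monopoly) revenue of a single-item distribution `μ`:
`Mye(μ) = sup_{x ≥ 0} x · Pr_{v ~ μ}[v ≥ x]`. -/
def Mye (μ : Measure ℝ) : ℝ≥0∞ :=
  ⨆ x : ℝ≥0, (x : ℝ≥0∞) * μ {v : ℝ | (x : ℝ) ≤ v}

/-
A sale of item `i` at price `p i` can only happen when `v i ≥ p i`, so pointwise the revenue
from items in `S` is at most the sum over `i ∈ S` of the revenue of selling item `i` alone at
the posted price `p i`. In expectation the `i`-th term depends only on the marginal `F_i`, and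
the revenue of a single posted price is bounded by the Myerson revenue.
-/

def postedPriceRevenue (x : ℝ≥0) (t : ℝ) : ℝ≥0∞ :=
  (Set.Ici (x : ℝ)).indicator (fun _ => (x : ℝ≥0∞)) t

theorem measurable_postedPriceRevenue (x : ℝ≥0) : Measurable (postedPriceRevenue x) :=
  measurable_const.indicator measurableSet_Ici

theorem le_Mye (μ : Measure ℝ) (x : ℝ≥0) : (x : ℝ≥0∞) * μ {v | (x : ℝ) ≤ v} ≤ Mye μ :=
  le_iSup (fun x : ℝ≥0 => (x : ℝ≥0∞) * μ {v | (x : ℝ) ≤ v}) x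

theorem lintegral_postedPriceRevenue_comp_le_Mye {Ω : Type*} [MeasurableSpace Ω]
    {F : Measure Ω} {f : Ω → ℝ} (hf : Measurable f) {μ : Measure ℝ} (hμ : F.map f = μ)
    (x : ℝ≥0) : ∫⁻ ω, postedPriceRevenue x (f ω) ∂F ≤ Mye μ := by
  rw [← lintegral_map (measurable_postedPriceRevenue x) hf, hμ]
  unfold postedPriceRevenue
  rw [lintegral_indicator_const measurableSet_Ici]
  exact le_Mye μ x

-- Items priced at `⊤` are never sold, so the junk value `(⊤ : ℝ≥0∞).toNNReal = 0` is harmless.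
theorem BuyerRule.revenue_on_le_sum_postedPriceRevenue {n : ℕ} (B : BuyerRule n)
    (S : Finset (Fin n)) (p : Fin n → ℝ≥0∞) (v : Fin n → ℝ) :
    (B.choose v p).elim 0 (fun j => if j ∈ S then p j else 0) ≤
      ∑ i ∈ S, postedPriceRevenue (p i).toNNReal (v i) := by
  cases h : B.choose v p with
  | none => exact zero_le
  | some j =>
    by_cases hj : j ∈ S
    · obtain ⟨hfin, hle⟩ := B.feasible v p j h
      have hsale : postedPriceRevenue (p j).toNNReal (v j) = p j := by
        rw [postedPriceRevenue, Set.indicator_of_mem (by exact hle), ENNReal.coe_toNNReal hfin]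
      simp only [Option.elim, if_pos hj]
      exact hsale ▸ Finset.single_le_sum
        (f := fun i => postedPriceRevenue (p i).toNNReal (v i)) (fun _ _ => zero_le) hj
    · simp [hj]

theorem revenue_contribution_le_sum_myerson
    (n : ℕ) (B : BuyerRule n) (marg : Fin n → Measure ℝ)
    (S : Finset (Fin n)) (p : Fin n → ℝ≥0∞)
    (F : Measure (Fin n → ℝ)) (hF : Compatible marg F) :
    ∫⁻ v, (B.choose v p).elim 0 (fun j => if j ∈ S then p j else 0) ∂F ≤
      ∑ i ∈ S, Mye (marg i) :=
  calc ∫⁻ v, (B.choose v p).elim 0 (fun j => if j ∈ S then p j else 0) ∂F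
      ≤ ∫⁻ v, ∑ i ∈ S, postedPriceRevenue (p i).toNNReal (v i) ∂F :=
        lintegral_mono (B.revenue_on_le_sum_postedPriceRevenue S p)
    _ = ∑ i ∈ S, ∫⁻ v, postedPriceRevenue (p i).toNNReal (v i) ∂F :=
        lintegral_finsetSum' S fun i _ =>
          ((measurable_postedPriceRevenue _).comp (measurable_pi_apply i)).aemeasurable
    _ ≤ ∑ i ∈ S, Mye (marg i) := Finset.sum_le_sum fun i _ =>
        lintegral_postedPriceRevenue_comp_le_Mye (measurable_pi_apply i) (hF.2 i) _
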